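/- arXiv:2008.00114 — 2 statements merged into one kernel-verified Lean document; each statement's English description precedes it below -/
import Mathlib

section
/- For every ν ∈ [1, p*] there exists a constant C_ν > 0 (depending on N, p, q, ν, Ω) such that ∫_Ω |u(x)|^ν dx ≤ C_ν · (‖∇u‖_𝓗)^ν for every u ∈ C_c^∞(Ω). -/
open MeasureTheory
open scoped NNReal RealInnerProductSpace

/-- The `𝓗`-modular: `ϱ_𝓗(w) = ∫_Ω (|w|^p + a(x)|w|^q) dx`. -/
noncomputable def rhoH {N : ℕ} (Ω : Set (EuclideanSpace ℝ (Fin N))) (p q : ℝ)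
    (a w : EuclideanSpace ℝ (Fin N) → ℝ) : ℝ :=
  ∫ x in Ω, (|w x| ^ p + a x * |w x| ^ q)

/-- The Luxemburg norm `‖w‖_𝓗 = inf {λ > 0 : ϱ_𝓗(w/λ) ≤ 1}`. -/
noncomputable def luxH {N : ℕ} (Ω : Set (EuclideanSpace ℝ (Fin N))) (p q : ℝ)
    (a w : EuclideanSpace ℝ (Fin N) → ℝ) : ℝ :=
  sInf {l : ℝ | 0 < l ∧ rhoH Ω p q a (fun x => w x / l) ≤ 1}

/-- `Ω` has Lipschitz boundary: near each boundary point there are a unit direction `v`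
and a Lipschitz function `φ`, constant in the direction `v`, such that locally
`Ω = {y : φ(y) < ⟪y, v⟫}`. -/
def HasLipschitzBoundary {N : ℕ} (Ω : Set (EuclideanSpace ℝ (Fin N))) : Prop :=
  ∀ x ∈ frontier Ω, ∃ r : ℝ, 0 < r ∧ ∃ v : EuclideanSpace ℝ (Fin N), ‖v‖ = 1 ∧
    ∃ (K : ℝ≥0) (φ : EuclideanSpace ℝ (Fin N) → ℝ), LipschitzWith K φ ∧
      (∀ y : EuclideanSpace ℝ (Fin N), ∀ t : ℝ, φ (y + t • v) = φ y) ∧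
      ∀ y ∈ Metric.ball x r, (y ∈ Ω ↔ φ y < ⟪y, v⟫)

/-- `u` belongs to `C_c^∞(Ω)`: `u` is smooth, compactly supported, with support inside `Ω`. -/
def CcInfty {N : ℕ} (Ω : Set (EuclideanSpace ℝ (Fin N)))
    (u : EuclideanSpace ℝ (Fin N) → ℝ) : Prop :=
  ContDiff ℝ (⊤ : ℕ∞) u ∧ HasCompactSupport u ∧ tsupport u ⊆ Ω

/-- Proposition 2.3 (embedding part): for every `ν ∈ [1, p*]` there is `C_ν > 0` with
`∫_Ω |u|^ν dx ≤ C_ν ‖∇u‖_𝓗^ν` for every `u ∈ C_c^∞(Ω)`. -/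
theorem stmt_7 {N : ℕ} (hN : 2 ≤ N) (Ω : Set (EuclideanSpace ℝ (Fin N)))
    (hΩo : IsOpen Ω) (hΩne : Ω.Nonempty) (hΩbd : Bornology.IsBounded Ω)
    (hΩlip : HasLipschitzBoundary Ω)
    (p q : ℝ) (hp : 1 < p) (hpq : p < q) (hqN : q < N) (hpqN : q / p < 1 + 1 / N)
    (a : EuclideanSpace ℝ (Fin N) → ℝ) (Ka : ℝ≥0)
    (haLip : LipschitzOnWith Ka a (closure Ω)) (ha0 : ∀ x ∈ closure Ω, 0 ≤ a x)
    (ν : ℝ) (hν1 : 1 ≤ ν) (hν2 : ν ≤ N * p / (N - p)) :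
    ∃ C > (0 : ℝ), ∀ u : EuclideanSpace ℝ (Fin N) → ℝ, CcInfty Ω u →
      ∫ x in Ω, |u x| ^ ν ≤ C * (luxH Ω p q a fun x => ‖fderiv ℝ u x‖) ^ ν := by
  
  classical
  have hp0 : (0:ℝ) < p := lt_trans one_pos hp
  have hq0 : (0:ℝ) < q := hp0.trans hpq
  have hpN : p < (N:ℝ) := hpq.trans hqN
  have hN0 : (0:ℝ) < N := hp0.trans hpN
  have hν0 : (0:ℝ) < ν := lt_of_lt_of_le one_pos hν1
  set p₀ : ℝ≥0 := p.toNNReal with hp₀def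
  set ν₀ : ℝ≥0 := ν.toNNReal with hν₀def
  have hp₀coe : (p₀:ℝ) = p := Real.coe_toNNReal p hp0.le
  have hν₀coe : (ν₀:ℝ) = ν := Real.coe_toNNReal ν hν0.le
  have hp₀ne : p₀ ≠ 0 := by
    intro h; rw [← hp₀coe, h] at hp0; simp at hp0
  have hν₀ne : ν₀ ≠ 0 := by
    intro h; rw [← hν₀coe, h] at hν0; simp at hν0
  have hfr : Module.finrank ℝ (EuclideanSpace ℝ (Fin N)) = N := finrank_euclideanSpace_fin
  set K : ℝ≥0 := eLpNormLESNormFDerivOfLeConst ℝ (volume) Ω p₀ ν₀ with hKdef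
  refine ⟨((K:ℝ)+1)^ν, Real.rpow_pos_of_pos (by positivity) ν, ?_⟩
  rintro u ⟨hsm, hcs, hsupp⟩
  set w : EuclideanSpace ℝ (Fin N) → ℝ := fun x => ‖fderiv ℝ u x‖ with hwdef
  set L : ℝ := luxH Ω p q a w with hLdef
  have hΩm : MeasurableSet Ω := hΩo.measurableSet
  have hμΩ : volume Ω ≠ ⊤ := hΩbd.measure_lt_top.ne
  have husup : Function.support u ⊆ Ω := (subset_tsupport u).trans hsupp
  have hgsup : Function.support (fderiv ℝ u) ⊆ Ω :=
    (support_fderiv_subset ℝ).trans hsupp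
  have hu1 : ContDiff ℝ 1 u := hsm.of_le (by simp)
  have hgc : Continuous (fderiv ℝ u) := (hsm.fderiv_right (m := 0) (by simp)).continuous
  have hwc : Continuous w := hgc.norm
  have hw0 : ∀ x, 0 ≤ w x := fun x => norm_nonneg _
  have hgcs : HasCompactSupport (fderiv ℝ u) := hcs.fderiv (𝕜 := ℝ)
  -- integrability of the pieces of the modular
  have intP : IntegrableOn (fun x => w x ^ p) Ω volume := by
    have h1 : Continuous (fun x => w x ^ p) := hwc.rpow_const (fun x => Or.inr hp0.le)
    have h2 : HasCompactSupport (fun x => w x ^ p) := hgcs.norm.rpow_const hp0.ne'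
    exact (h1.integrable_of_hasCompactSupport h2).integrableOn
  have intQ : IntegrableOn (fun x => a x * w x ^ q) Ω volume := by
    have h1 : Continuous (fun x => w x ^ q) := hwc.rpow_const (fun x => Or.inr hq0.le)
    have haM : AEStronglyMeasurable (fun x => a x * w x ^ q) (volume.restrict Ω) :=
      (((haLip.continuousOn).mono subset_closure).aestronglyMeasurable hΩm).mul
        h1.aestronglyMeasurable
    obtain ⟨A, hA⟩ := (hΩbd.isCompact_closure).exists_bound_of_continuousOn
      haLip.continuousOn
    obtain ⟨x₀, hM⟩ := h1.exists_forall_ge_of_hasCompactSupport (hgcs.norm.rpow_const hq0.ne')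
    set M : ℝ := w x₀ ^ q with hMdef
    refine ⟨haM, HasFiniteIntegral.restrict_of_bounded (|A| * |M|)
      hΩbd.measure_lt_top ?_⟩
    refine (ae_restrict_iff' hΩm).mpr (Filter.Eventually.of_forall (fun x hx => ?_))
    have hwq0 : 0 ≤ w x ^ q := Real.rpow_nonneg (hw0 x) q
    have h3 : ‖a x * w x ^ q‖ = |a x| * |w x ^ q| := abs_mul _ _
    rw [h3]
    have hax : |a x| ≤ |A| := le_trans (hA x (subset_closure hx)) (le_abs_self A)
    have hwx : |w x ^ q| ≤ |M| := by
      rw [abs_of_nonneg hwq0]; exact le_trans (hM x) (le_abs_self M)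
    exact mul_le_mul hax hwx (abs_nonneg _) (abs_nonneg _)
  set P : ℝ := ∫ x in Ω, w x ^ p with hPdef
  set Q : ℝ := ∫ x in Ω, a x * w x ^ q with hQdef
  have hP0 : 0 ≤ P := setIntegral_nonneg hΩm (fun x _ => Real.rpow_nonneg (hw0 x) p)
  have hQ0 : 0 ≤ Q := setIntegral_nonneg hΩm
    (fun x hx => mul_nonneg (ha0 x (subset_closure hx)) (Real.rpow_nonneg (hw0 x) q))
  -- formula for the modular of w / l
  have hrho : ∀ l : ℝ, 0 < l → rhoH Ω p q a (fun x => w x / l) = P / l^p + Q / l^q := by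
    intro l hl
    have hcong : ∀ x, |w x / l| ^ p + a x * |w x / l| ^ q
        = (w x ^ p) / l ^ p + (a x * w x ^ q) / l ^ q := by
      intro x
      rw [abs_div, abs_of_nonneg (hw0 x), abs_of_nonneg hl.le,
        Real.div_rpow (hw0 x) hl.le, Real.div_rpow (hw0 x) hl.le, mul_div_assoc]
    unfold rhoH
    simp_rw [hcong]
    rw [integral_add (intP.div_const _) (intQ.div_const _), integral_div, integral_div]
  set S : Set ℝ := {l : ℝ | 0 < l ∧ rhoH Ω p q a (fun x => w x / l) ≤ 1} with hSdef
  have hSne : S.Nonempty := by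
    refine ⟨P + Q + 1, by positivity, ?_⟩
    have hl1 : (1:ℝ) ≤ P + Q + 1 := by linarith
    have hl0 : (0:ℝ) < P + Q + 1 := by positivity
    rw [hrho _ hl0]
    have hlp : P + Q + 1 ≤ (P + Q + 1) ^ p := by
      calc P + Q + 1 = (P + Q + 1) ^ (1:ℝ) := (Real.rpow_one _).symm
        _ ≤ (P + Q + 1) ^ p := Real.rpow_le_rpow_of_exponent_le hl1 hp.le
    have hlq : P + Q + 1 ≤ (P + Q + 1) ^ q := by
      calc P + Q + 1 = (P + Q + 1) ^ (1:ℝ) := (Real.rpow_one _).symm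
        _ ≤ (P + Q + 1) ^ q := Real.rpow_le_rpow_of_exponent_le hl1 (hp.le.trans hpq.le)
    have h1 : P / (P+Q+1)^p ≤ P / (P+Q+1) := div_le_div_of_nonneg_left hP0 hl0 hlp
    have h2 : Q / (P+Q+1)^q ≤ Q / (P+Q+1) := div_le_div_of_nonneg_left hQ0 hl0 hlq
    have h3 : P / (P+Q+1) + Q / (P+Q+1) ≤ 1 := by
      rw [← add_div, div_le_one hl0]; linarith
    linarith
  have hSlb : ∀ l ∈ S, P ^ (p⁻¹) ≤ l := by
    rintro l ⟨hl, hrl⟩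
    rw [hrho _ hl] at hrl
    have hQl : 0 ≤ Q / l ^ q := div_nonneg hQ0 (Real.rpow_nonneg hl.le q)
    have hPl : P / l ^ p ≤ 1 := by linarith
    have hPle : P ≤ l ^ p := by
      rw [div_le_one (Real.rpow_pos_of_pos hl p)] at hPl; exact hPl
    calc P ^ (p⁻¹) ≤ (l ^ p) ^ (p⁻¹) :=
          Real.rpow_le_rpow hP0 hPle (inv_nonneg.mpr hp0.le)
      _ = l := by rw [← Real.rpow_mul hl.le, mul_inv_cancel₀ hp0.ne', Real.rpow_one]
  have hLluxS : L = sInf S := by rw [hLdef]; rfl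
  have hL : P ^ (p⁻¹) ≤ L := by rw [hLluxS]; exact le_csInf hSne hSlb
  have hL0 : 0 ≤ L := le_trans (Real.rpow_nonneg hP0 _) hL
  have hPL : P ≤ L ^ p := by
    calc P = (P ^ (p⁻¹)) ^ p := by
          rw [← Real.rpow_mul hP0, inv_mul_cancel₀ hp0.ne', Real.rpow_one]
      _ ≤ L ^ p := Real.rpow_le_rpow (Real.rpow_nonneg hP0 _) hL hp0.le
  -- Sobolev inequality
  have hp₀1 : 1 ≤ p₀ := by
    rw [← NNReal.coe_le_coe, NNReal.coe_one, hp₀coe]; exact hp.le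
  have h2p₀ : p₀ < (Module.finrank ℝ (EuclideanSpace ℝ (Fin N)) : ℝ≥0) := by
    rw [hfr, ← NNReal.coe_lt_coe, hp₀coe]; push_cast; exact hpN
  have hpq₀ : (p₀:ℝ)⁻¹ - ((Module.finrank ℝ (EuclideanSpace ℝ (Fin N))):ℝ)⁻¹ ≤ ((ν₀:ℝ))⁻¹ := by
    rw [hfr, hp₀coe, hν₀coe]
    have hNp : (0:ℝ) < (N:ℝ) - p := by linarith
    have hM0 : (0:ℝ) < (N:ℝ) * p / ((N:ℝ) - p) := by positivity
    have h1 : ((N:ℝ) * p / ((N:ℝ) - p))⁻¹ ≤ ν⁻¹ := by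
      apply inv_anti₀ hν0 hν2
    calc p⁻¹ - ((N:ℝ))⁻¹ = ((N:ℝ) * p / ((N:ℝ) - p))⁻¹ := by
          field_simp
      _ ≤ ν⁻¹ := h1
  have sob : eLpNorm u ν₀ volume ≤ K * eLpNorm (fderiv ℝ u) p₀ volume :=
    eLpNorm_le_eLpNorm_fderiv_of_le volume hu1 husup hp₀1 h2p₀ hpq₀ hΩbd
  -- gradient eLpNorm bounded by Luxemburg norm
  have hgrad : eLpNorm (fderiv ℝ u) p₀ volume ≤ ENNReal.ofReal L := by
    rw [← eLpNorm_restrict_eq_of_support_subset (f := fderiv ℝ u) (s := Ω) hgsup, eLpNorm_nnreal_eq_lintegral hp₀ne]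
    have hlint : ∫⁻ x in Ω, ‖fderiv ℝ u x‖ₑ ^ (p₀:ℝ) = ENNReal.ofReal P := by
      rw [hPdef, ofReal_integral_eq_lintegral_ofReal intP
        ((ae_restrict_iff' hΩm).mpr (Filter.Eventually.of_forall
          (fun x _ => Real.rpow_nonneg (hw0 x) p)))]
      refine lintegral_congr (fun x => ?_)
      rw [hp₀coe, ← ofReal_norm,
        ← ENNReal.ofReal_rpow_of_nonneg (norm_nonneg _) hp0.le]
    rw [hlint, hp₀coe]
    calc (ENNReal.ofReal P) ^ (1/p) = ENNReal.ofReal (P ^ (1/p)) := by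
          rw [ENNReal.ofReal_rpow_of_nonneg hP0 (by positivity)]
      _ ≤ ENNReal.ofReal L := by
          apply ENNReal.ofReal_le_ofReal; rw [one_div]; exact hL
  -- left-hand side as an eLpNorm
  have intU : IntegrableOn (fun x => |u x| ^ ν) Ω volume := by
    have h1 : Continuous (fun x => |u x| ^ ν) :=
      (hsm.continuous.abs).rpow_const (fun x => Or.inr hν0.le)
    have h2 : HasCompactSupport (fun x => |u x| ^ ν) := by
      have := (hcs.abs).rpow_const hν0.ne'
      simpa using this
    exact (h1.integrable_of_hasCompactSupport h2).integrableOn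
  have hInt : ENNReal.ofReal (∫ x in Ω, |u x| ^ ν) = (eLpNorm u ν₀ volume) ^ ν := by
    rw [← eLpNorm_restrict_eq_of_support_subset husup, eLpNorm_nnreal_eq_lintegral hν₀ne]
    rw [← ENNReal.rpow_mul, hν₀coe, one_div, inv_mul_cancel₀ hν0.ne', ENNReal.rpow_one]
    rw [ofReal_integral_eq_lintegral_ofReal intU
      ((ae_restrict_iff' hΩm).mpr (Filter.Eventually.of_forall
        (fun x _ => Real.rpow_nonneg (abs_nonneg _) ν)))]
    refine lintegral_congr (fun x => ?_)
    rw [← ofReal_norm, Real.norm_eq_abs,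
      ← ENNReal.ofReal_rpow_of_nonneg (abs_nonneg _) hν0.le]
  -- final chain
  have key : ENNReal.ofReal (∫ x in Ω, |u x| ^ ν)
      ≤ ENNReal.ofReal (((K:ℝ)+1)^ν * L^ν) := by
    rw [hInt]
    have hK1 : (K:ENNReal) ≤ ENNReal.ofReal ((K:ℝ)+1) := by
      rw [← ENNReal.ofReal_coe_nnreal]
      exact ENNReal.ofReal_le_ofReal (by linarith [K.coe_nonneg])
    calc (eLpNorm u ν₀ volume) ^ ν
        ≤ (↑K * eLpNorm (fderiv ℝ u) p₀ volume) ^ ν := ENNReal.rpow_le_rpow sob hν0.le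
      _ ≤ (ENNReal.ofReal ((K:ℝ)+1) * ENNReal.ofReal L) ^ ν :=
          ENNReal.rpow_le_rpow (mul_le_mul' hK1 hgrad) hν0.le
      _ = (ENNReal.ofReal (((K:ℝ)+1) * L)) ^ ν := by
          rw [← ENNReal.ofReal_mul (by positivity)]
      _ = ENNReal.ofReal ((((K:ℝ)+1) * L) ^ ν) := by
          rw [ENNReal.ofReal_rpow_of_nonneg (by positivity) hν0.le]
      _ = ENNReal.ofReal (((K:ℝ)+1)^ν * L^ν) := by
          rw [Real.mul_rpow (by positivity) hL0]
  exact (ENNReal.ofReal_le_ofReal_iff (by positivity)).mp key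
end

section
/- Assume (M₁), (M₂) and (f₁). Then there exist ρ ∈ (0,1] and α > 0 such that J(u) ≥ α for every u ∈ C_c^∞(Ω) with ‖∇u‖_𝓗 = ρ. -/
open MeasureTheory
open scoped NNReal ENNReal RealInnerProductSpace FiniteDimensional
open Module

lemma intOn {N : ℕ} {Ω : Set (EuclideanSpace ℝ (Fin N))} (hΩm : MeasurableSet Ω)
    (hvol : volume Ω < ⊤) {g : EuclideanSpace ℝ (Fin N) → ℝ} (hg : ContinuousOn g Ω)
    {C : ℝ} (hC : ∀ x ∈ Ω, |g x| ≤ C) : IntegrableOn g Ω := by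
  refine Integrable.mono' (integrableOn_const (C := C) hvol.ne)
    (hg.aestronglyMeasurable hΩm) ?_
  exact (ae_restrict_iff' hΩm).2 (ae_of_all _ fun x hx => by
    simpa [Real.norm_eq_abs] using hC x hx)

lemma absIntLe_aux {g : ℝ → ℝ} (hg : Continuous g) {c d A B : ℝ}
    (hc : 1 < c) (hd : 1 < d) (hA : 0 ≤ A) (hB : 0 ≤ B)
    (hb : ∀ τ : ℝ, |g τ| ≤ c * A * |τ| ^ (c - 1) + d * B * |τ| ^ (d - 1)) {t : ℝ}
    (ht : 0 ≤ t) :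
    |∫ τ in (0:ℝ)..t, g τ| ≤ A * t ^ c + B * t ^ d := by
  have hc0 : (0:ℝ) < c := by linarith
  have hd0 : (0:ℝ) < d := by linarith
  have hbc : Continuous fun τ : ℝ => c * A * |τ| ^ (c - 1) + d * B * |τ| ^ (d - 1) := by
    apply Continuous.add
    · exact continuous_const.mul (continuous_abs.rpow_const fun x => Or.inr (by linarith))
    · exact continuous_const.mul (continuous_abs.rpow_const fun x => Or.inr (by linarith))
  calc |∫ τ in (0:ℝ)..t, g τ| ≤ ∫ τ in (0:ℝ)..t, |g τ| :=
        intervalIntegral.abs_integral_le_integral_abs ht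
    _ ≤ ∫ τ in (0:ℝ)..t, (c * A * |τ| ^ (c - 1) + d * B * |τ| ^ (d - 1)) :=
        intervalIntegral.integral_mono_on ht (hg.abs.intervalIntegrable _ _)
          (hbc.intervalIntegrable _ _) (fun x _ => hb x)
    _ = ∫ τ in (0:ℝ)..t, (c * A * τ ^ (c - 1) + d * B * τ ^ (d - 1)) := by
        refine intervalIntegral.integral_congr (fun τ hτ => ?_)
        rw [Set.uIcc_of_le ht] at hτ
        rw [abs_of_nonneg hτ.1]
    _ = c * A * (t ^ c / c) + d * B * (t ^ d / d) := by
        have hic : IntervalIntegrable (fun τ:ℝ => τ ^ (c-1)) volume 0 t :=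
          (continuous_id.rpow_const fun x => Or.inr (by linarith)).intervalIntegrable _ _
        have hid : IntervalIntegrable (fun τ:ℝ => τ ^ (d-1)) volume 0 t :=
          (continuous_id.rpow_const fun x => Or.inr (by linarith)).intervalIntegrable _ _
        have e1 : (∫ τ in (0:ℝ)..t, τ ^ (c - 1)) = t ^ c / c := by
          rw [integral_rpow (Or.inl (by linarith)),
            Real.zero_rpow (by linarith : (0:ℝ) < c - 1 + 1).ne', show c-1+1 = c by ring]
          ring
        have e2 : (∫ τ in (0:ℝ)..t, τ ^ (d - 1)) = t ^ d / d := by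
          rw [integral_rpow (Or.inl (by linarith)),
            Real.zero_rpow (by linarith : (0:ℝ) < d - 1 + 1).ne', show d-1+1 = d by ring]
          ring
        rw [intervalIntegral.integral_add (hic.const_mul _) (hid.const_mul _),
          intervalIntegral.integral_const_mul, intervalIntegral.integral_const_mul, e1, e2]
    _ = A * t ^ c + B * t ^ d := by
        field_simp

lemma absIntLe {g : ℝ → ℝ} (hg : Continuous g) {c d A B : ℝ}
    (hc : 1 < c) (hd : 1 < d) (hA : 0 ≤ A) (hB : 0 ≤ B)
    (hb : ∀ τ : ℝ, |g τ| ≤ c * A * |τ| ^ (c - 1) + d * B * |τ| ^ (d - 1)) (t : ℝ) :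
    |∫ τ in (0:ℝ)..t, g τ| ≤ A * |t| ^ c + B * |t| ^ d := by
  rcases le_or_gt 0 t with ht | ht
  · rw [abs_of_nonneg ht]; exact absIntLe_aux hg hc hd hA hB hb ht
  · have h1 : (∫ τ in (0:ℝ)..t, g τ) = -∫ τ in (0:ℝ)..(-t), g (-τ) := by
      rw [intervalIntegral.integral_comp_neg g, neg_zero, intervalIntegral.integral_symm, neg_neg]
    rw [h1, abs_neg, abs_of_neg ht]
    apply absIntLe_aux (hg.comp continuous_neg) hc hd hA hB _ (by linarith)
    intro τ
    simpa [abs_neg] using hb (-τ)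

lemma Mlow {M : ℝ → ℝ} (hMc : Continuous M) (hM0 : ∀ t, 0 ≤ M t) {θ : ℝ} (hθ1 : 1 ≤ θ)
    (hM1 : ∀ t, 0 ≤ t → t * M t ≤ θ * ∫ τ in (0:ℝ)..t, M τ) {t : ℝ} (ht0 : 0 < t) (ht1 : t ≤ 1) :
    (∫ τ in (0:ℝ)..1, M τ) * t ^ θ ≤ ∫ τ in (0:ℝ)..t, M τ := by
  set G : ℝ → ℝ := fun s => (∫ τ in (0:ℝ)..s, M τ) * s ^ (-θ) with hG
  have hMder : ∀ s : ℝ, HasDerivAt (fun v => ∫ τ in (0:ℝ)..v, M τ) (M s) s := fun s =>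
    intervalIntegral.integral_hasDerivAt_right (hMc.intervalIntegrable _ _)
      (hMc.stronglyMeasurable.stronglyMeasurableAtFilter) hMc.continuousAt
  have hGder : ∀ s : ℝ, 0 < s →
      HasDerivAt G (M s * s ^ (-θ) + (∫ τ in (0:ℝ)..s, M τ) * (-θ * s ^ (-θ - 1))) s := by
    intro s hs
    exact (hMder s).mul (Real.hasDerivAt_rpow_const (Or.inl hs.ne'))
  have hanti : AntitoneOn G (Set.Icc t 1) := by
    apply antitoneOn_of_deriv_nonpos (convex_Icc t 1)
    · apply ContinuousOn.mul
      · exact (continuous_iff_continuousAt.2 fun s => (hMder s).continuousAt).continuousOn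
      · intro s hs
        exact (Real.continuousAt_rpow_const s (-θ) (Or.inl (by
          have := hs.1; intro h; rw [h] at this; linarith))).continuousWithinAt
    · intro s hs
      rw [interior_Icc] at hs
      exact ((hGder s (ht0.trans hs.1)).differentiableAt).differentiableWithinAt
    · intro s hs
      rw [interior_Icc] at hs
      have hs0 : 0 < s := ht0.trans hs.1
      rw [(hGder s hs0).deriv]
      have hsp : s ^ (-θ) = s * s ^ (-θ - 1) := by
        have h2 := Real.rpow_add hs0 1 (-θ - 1)
        rw [Real.rpow_one] at h2
        rw [show 1 + (-θ - 1) = -θ by ring] at h2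
        exact h2
      rw [hsp]
      have h1 := hM1 s hs0.le
      have h2 : (0:ℝ) ≤ s ^ (-θ - 1) := Real.rpow_nonneg hs0.le _
      nlinarith [h1, h2]
  have hmem1 : (1:ℝ) ∈ Set.Icc t 1 := ⟨ht1, le_refl 1⟩
  have hmemt : t ∈ Set.Icc t 1 := ⟨le_refl t, ht1⟩
  have h := hanti hmemt hmem1 ht1
  rw [hG] at h
  simp only [Real.one_rpow] at h
  -- h : (∫ τ in 0..1, M τ) * 1 ≤ (∫ τ in 0..t, M τ) * t ^ (-θ)
  have hpos : (0:ℝ) < t ^ θ := Real.rpow_pos_of_pos ht0 θ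
  have hneg : t ^ (-θ) = (t ^ θ)⁻¹ := Real.rpow_neg ht0.le θ
  rw [hneg] at h
  calc (∫ τ in (0:ℝ)..1, M τ) * t ^ θ ≤ ((∫ τ in (0:ℝ)..t, M τ) * (t ^ θ)⁻¹) * t ^ θ := by
        apply mul_le_mul_of_nonneg_right _ hpos.le
        simpa using h
    _ = ∫ τ in (0:ℝ)..t, M τ := by field_simp

set_option maxHeartbeats 2000000

/-- Lemma 3.1: under `(M₁)`, `(M₂)`, `(f₁)`, there are `ρ ∈ (0,1]` and `α > 0` such that
`J(u) ≥ α` whenever `u ∈ C_c^∞(Ω)` and `‖∇u‖_𝓗 = ρ`, where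
`J(u) = 𝓜(φ_𝓗(∇u)) − ∫_Ω F(x,u)dx`. -/
theorem stmt_12 {N : ℕ} (hN : 2 ≤ N) (Ω : Set (EuclideanSpace ℝ (Fin N)))
    (hΩo : IsOpen Ω) (hΩne : Ω.Nonempty) (hΩbd : Bornology.IsBounded Ω)
    (hΩlip : HasLipschitzBoundary Ω)
    (p q : ℝ) (hp : 1 < p) (hpq : p < q) (hqN : q < N) (hpqN : q / p < 1 + 1 / N)
    (a : EuclideanSpace ℝ (Fin N) → ℝ) (Ka : ℝ≥0)
    (haLip : LipschitzOnWith Ka a (closure Ω)) (ha0 : ∀ x ∈ closure Ω, 0 ≤ a x)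
    -- (M₁)
    (M : ℝ → ℝ) (hMc : ContinuousOn M (Set.Ici 0)) (hM0 : ∀ t, 0 ≤ t → 0 ≤ M t)
    (θ : ℝ) (hθ1 : 1 ≤ θ) (hθ2 : θ < (N * p / (N - p)) / q)
    (hM1 : ∀ t, 0 ≤ t → t * M t ≤ θ * ∫ τ in (0:ℝ)..t, M τ)
    -- (M₂)
    (hM2 : ∀ τ : ℝ, 0 < τ → ∃ κ > (0:ℝ), ∀ t, τ ≤ t → κ ≤ M t)
    -- f Carathéodory
    (f : EuclideanSpace ℝ (Fin N) → ℝ → ℝ)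
    (hfmeas : ∀ t : ℝ, Measurable fun x => f x t)
    (hfcont : ∀ᵐ x ∂(volume.restrict Ω), Continuous (f x))
    -- (f₁)
    (r : ℝ) (hr1 : q * θ < r) (hr2 : r < N * p / (N - p))
    (hf1 : ∀ ε > (0:ℝ), ∃ δ > (0:ℝ), ∀ᵐ x ∂(volume.restrict Ω), ∀ t : ℝ,
      |f x t| ≤ q * θ * ε * |t| ^ (q * θ - 1) + r * δ * |t| ^ (r - 1)) :
    ∃ ρ : ℝ, ρ ∈ Set.Ioc (0:ℝ) 1 ∧ ∃ α > (0:ℝ),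
      ∀ u : EuclideanSpace ℝ (Fin N) → ℝ, CcInfty Ω u →
        luxH Ω p q a (fun x => ‖fderiv ℝ u x‖) = ρ →
        α ≤ (∫ τ in (0:ℝ)..(∫ x in Ω, (‖fderiv ℝ u x‖ ^ p / p + a x * ‖fderiv ℝ u x‖ ^ q / q)), M τ)
            - ∫ x in Ω, ∫ τ in (0:ℝ)..(u x), f x τ := by
  classical
  have hp0 : (0:ℝ) < p := lt_trans one_pos hp
  have hq0 : (0:ℝ) < q := lt_trans hp0 hpq
  have hθ0 : (0:ℝ) < θ := lt_of_lt_of_le one_pos hθ1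
  have hNR : (2:ℝ) ≤ N := by exact_mod_cast hN
  have hpN : p < N := lt_trans hpq hqN
  have hNp : (0:ℝ) < N - p := by linarith
  have hN0 : (0:ℝ) < N := by linarith
  have hqθ1 : 1 < q * θ := by
    have h1 : q * 1 ≤ q * θ := mul_le_mul_of_nonneg_left hθ1 hq0.le
    have h2 : (1:ℝ) < q := hp.trans hpq
    linarith only [h1, h2]
  have hqθpS : q * θ < N * p / (N - p) := by
    have h := (mul_lt_mul_of_pos_left hθ2 hq0)
    calc q * θ < q * ((N * p / (N - p)) / q) := h
      _ = N * p / (N - p) := by field_simp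
  have hrqθ : (0:ℝ) < r - q * θ := by linarith
  have hr0 : (0:ℝ) < r := by linarith
  have hΩm : MeasurableSet Ω := hΩo.measurableSet
  have hvol : volume Ω < ⊤ :=
    lt_of_le_of_lt (measure_mono subset_closure) hΩbd.isCompact_closure.measure_lt_top
  obtain ⟨Aa, hAa⟩ : ∃ C, ∀ x ∈ closure Ω, ‖a x‖ ≤ C :=
    hΩbd.isCompact_closure.exists_bound_of_continuousOn haLip.continuousOn
  have haC : ContinuousOn a Ω := haLip.continuousOn.mono subset_closure
  have haΩ : ∀ x ∈ Ω, 0 ≤ a x := fun x hx => ha0 x (subset_closure hx)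
  have haB : ∀ x ∈ Ω, |a x| ≤ Aa := fun x hx => by
    simpa [Real.norm_eq_abs] using hAa x (subset_closure hx)
  -- continuous version of M
  set Mc : ℝ → ℝ := fun t => M (max t 0) with hMcdef
  have hMcont : Continuous Mc :=
    hMc.comp_continuous (continuous_id.max continuous_const) (fun x => Set.mem_Ici.2 (le_max_right _ _))
  have hMint : ∀ t : ℝ, 0 ≤ t → (∫ τ in (0:ℝ)..t, M τ) = ∫ τ in (0:ℝ)..t, Mc τ := by
    intro t ht
    refine intervalIntegral.integral_congr (fun τ hτ => ?_)
    rw [Set.uIcc_of_le ht] at hτ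
    simp [hMcdef, max_eq_left hτ.1]
  have hMc0 : ∀ t, 0 ≤ Mc t := fun t => hM0 _ (le_max_right _ _)
  have hMc1 : ∀ t, 0 ≤ t → t * Mc t ≤ θ * ∫ τ in (0:ℝ)..t, Mc τ := by
    intro t ht
    rw [← hMint t ht]
    have he : Mc t = M t := by simp [hMcdef, max_eq_left ht]
    rw [he]; exact hM1 t ht
  set m1 : ℝ := ∫ τ in (0:ℝ)..1, Mc τ with hm1def
  obtain ⟨κ, hκ0, hκ⟩ := hM2 (1/2) (by norm_num)
  have hm1pos : 0 < m1 := by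
    have hsplit : (∫ τ in (0:ℝ)..(1/2:ℝ), Mc τ) + (∫ τ in (1/2:ℝ)..(1:ℝ), Mc τ) = m1 :=
      intervalIntegral.integral_add_adjacent_intervals (hMcont.intervalIntegrable _ _)
        (hMcont.intervalIntegrable _ _)
    have h1 : 0 ≤ ∫ τ in (0:ℝ)..(1/2:ℝ), Mc τ :=
      intervalIntegral.integral_nonneg (by norm_num) (fun x _ => hMc0 x)
    have h2 : (κ * (1/2) : ℝ) ≤ ∫ τ in (1/2:ℝ)..(1:ℝ), Mc τ := by
      have h3 : (∫ _τ in (1/2:ℝ)..(1:ℝ), (κ:ℝ)) ≤ ∫ τ in (1/2:ℝ)..(1:ℝ), Mc τ := by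
        apply intervalIntegral.integral_mono_on (by norm_num)
          (intervalIntegrable_const) (hMcont.intervalIntegrable _ _)
        intro x hx
        have he : Mc x = M x := by
          simp [hMcdef, max_eq_left (le_trans (by norm_num : (0:ℝ) ≤ 1/2) hx.1)]
        rw [he]; exact hκ x hx.1
      rw [intervalIntegral.integral_const] at h3
      calc (κ * (1/2) : ℝ) = (1 - 1/2) • κ := by norm_num; ring
        _ ≤ _ := h3
    linarith only [h1, h2, hsplit, hκ0]
  -- Sobolev constants
  set K1 : ℝ := ((eLpNormLESNormFDerivOfLeConst ℝ
      (volume : Measure (EuclideanSpace ℝ (Fin N))) Ω p.toNNReal (q*θ).toNNReal : ℝ≥0) : ℝ)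
      ^ (q*θ) with hK1def
  set K2 : ℝ := ((eLpNormLESNormFDerivOfLeConst ℝ
      (volume : Measure (EuclideanSpace ℝ (Fin N))) Ω p.toNNReal r.toNNReal : ℝ≥0) : ℝ)
      ^ r with hK2def
  have hK1nn : 0 ≤ K1 := Real.rpow_nonneg (NNReal.coe_nonneg _) _
  have hK2nn : 0 ≤ K2 := Real.rpow_nonneg (NNReal.coe_nonneg _) _
  have hQ : (0:ℝ) < q ^ θ := Real.rpow_pos_of_pos hq0 θ
  set ε : ℝ := m1 / (q ^ θ * 2 * (K1 + 1)) with hεdef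
  have hε0 : 0 < ε := div_pos hm1pos (by positivity)
  obtain ⟨δ, hδ0, hδae⟩ := hf1 ε hε0
  set base : ℝ := m1 / (q ^ θ * 4 * δ * (K2 + 1)) with hbasedef
  have hbase0 : 0 < base := div_pos hm1pos (by positivity)
  set ρ : ℝ := min 1 (base ^ (1 / (r - q*θ))) with hρdef
  have hρ0 : 0 < ρ := lt_min one_pos (Real.rpow_pos_of_pos hbase0 _)
  have hρ1 : ρ ≤ 1 := min_le_left _ _
  refine ⟨ρ, ⟨hρ0, hρ1⟩, (m1 / (q ^ θ * 4)) * ρ ^ (q*θ), by positivity, ?_⟩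
  intro u hu hlux
  obtain ⟨husm, hucs, husupp⟩ := hu
  have hucont : Continuous u := husm.continuous
  set w : EuclideanSpace ℝ (Fin N) → ℝ := fun x => ‖fderiv ℝ u x‖ with hwdef
  have hwcont : Continuous w := ((husm.fderiv_right (m := 0) (by simp)).continuous).norm
  have hw0 : ∀ x, 0 ≤ w x := fun x => norm_nonneg _
  have hwcs : HasCompactSupport w := (hucs.fderiv ℝ).norm
  have hwsupp : Function.support w ⊆ Ω := by
    intro x hx
    apply husupp
    have hne : fderiv ℝ u x ≠ 0 := by
      simpa [hwdef, Function.mem_support, norm_ne_zero_iff] using hx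
    exact support_fderiv_subset ℝ (by simpa [Function.mem_support] using hne)
  obtain ⟨W, hW⟩ := hwcont.bounded_above_of_compact_support hwcs
  have hWb : ∀ x, w x ≤ W := fun x =>
    le_trans (le_abs_self _) (by simpa [Real.norm_eq_abs] using hW x)
  obtain ⟨U, hUb'⟩ := hucont.bounded_above_of_compact_support hucs
  have hUb : ∀ x, |u x| ≤ U := fun x => by simpa [Real.norm_eq_abs] using hUb' x
  change (m1 / (q ^ θ * 4)) * ρ ^ (q*θ) ≤
    (∫ τ in (0:ℝ)..(∫ x in Ω, (w x ^ p / p + a x * w x ^ q / q)), M τ)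
      - ∫ x in Ω, ∫ τ in (0:ℝ)..(u x), f x τ
  clear_value w
  -- generic integrability
  have key_int : ∀ (g : EuclideanSpace ℝ (Fin N) → ℝ) (G c : ℝ), 0 < c → Continuous g →
      (∀ x, 0 ≤ g x) → (∀ x, g x ≤ G) → IntegrableOn (fun x => g x ^ c) Ω := by
    intro g G c hc hg hg0 hgG
    refine intOn hΩm hvol ((hg.rpow_const (fun x => Or.inr hc.le)).continuousOn) (C := G ^ c) ?_
    intro x hx
    rw [abs_of_nonneg (Real.rpow_nonneg (hg0 x) _)]
    exact Real.rpow_le_rpow (hg0 x) (hgG x) hc.le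
  have key_int_a : ∀ (g : EuclideanSpace ℝ (Fin N) → ℝ) (G c : ℝ), 0 < c → Continuous g →
      (∀ x, 0 ≤ g x) → (∀ x, g x ≤ G) → IntegrableOn (fun x => a x * g x ^ c) Ω := by
    intro g G c hc hg hg0 hgG
    refine intOn hΩm hvol (haC.mul ((hg.rpow_const (fun x => Or.inr hc.le)).continuousOn))
      (C := Aa * G ^ c) ?_
    intro x hx
    rw [abs_mul]
    apply mul_le_mul (haB x hx) ?h2 (abs_nonneg _) (le_trans (abs_nonneg _) (haB x hx))
    rw [abs_of_nonneg (Real.rpow_nonneg (hg0 x) _)]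
    exact Real.rpow_le_rpow (hg0 x) (hgG x) hc.le
  have int_mod : ∀ l : ℝ, 0 < l →
      IntegrableOn (fun x => |w x / l| ^ p + a x * |w x / l| ^ q) Ω := by
    intro l hl
    have hgc : Continuous fun x => |w x / l| := (hwcont.div_const l).abs
    have hg0 : ∀ x, 0 ≤ |w x / l| := fun x => abs_nonneg _
    have hgG : ∀ x, |w x / l| ≤ W / l := fun x => by
      rw [abs_of_nonneg (div_nonneg (hw0 x) hl.le)]
      gcongr
      exact hWb x
    exact (key_int _ (W/l) p hp0 hgc hg0 hgG).add (key_int_a _ (W/l) q hq0 hgc hg0 hgG)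
  set R : ℝ := ∫ x in Ω, (w x ^ p + a x * w x ^ q) with hRdef
  have int_R : IntegrableOn (fun x => w x ^ p + a x * w x ^ q) Ω :=
    (key_int w W p hp0 hwcont hw0 hWb).add (key_int_a w W q hq0 hwcont hw0 hWb)
  have hR0 : 0 ≤ R := setIntegral_nonneg hΩm (fun x hx =>
    add_nonneg (Real.rpow_nonneg (hw0 x) _) (mul_nonneg (haΩ x hx) (Real.rpow_nonneg (hw0 x) _)))
  set S : Set ℝ := {l : ℝ | 0 < l ∧ rhoH Ω p q a (fun x => w x / l) ≤ 1} with hSdef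
  unfold luxH at hlux
  have hlux' : sInf S = ρ := hlux
  have hSne : S.Nonempty := by
    by_contra h
    rw [Set.not_nonempty_iff_eq_empty] at h
    rw [h, Real.sInf_empty] at hlux'
    exact absurd hlux'.symm (ne_of_gt hρ0)
  have hSbdd : BddBelow S := ⟨0, fun m hm => hm.1.le⟩
  have hrho : ∀ l : ℝ, rhoH Ω p q a (fun x => w x / l)
      = ∫ x in Ω, (|w x / l| ^ p + a x * |w x / l| ^ q) := fun l => rfl
  have scale_pt : ∀ l : ℝ, 0 < l → ∀ x : EuclideanSpace ℝ (Fin N),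
      |w x / l| ^ p = w x ^ p / l ^ p ∧ |w x / l| ^ q = w x ^ q / l ^ q := by
    intro l hl x
    constructor <;>
      rw [abs_of_nonneg (div_nonneg (hw0 x) hl.le), Real.div_rpow (hw0 x) hl.le]
  have hlow : ∀ l : ℝ, 0 < l → l < ρ → l ^ q < R := by
    intro l hl0 hlρ
    have hlS : l ∉ S := notMem_of_lt_csInf (by rw [hlux']; exact hlρ) hSbdd
    have h1 : 1 < ∫ x in Ω, (|w x / l| ^ p + a x * |w x / l| ^ q) := by
      by_contra hcon
      push_neg at hcon
      exact hlS ⟨hl0, by rw [hrho]; exact hcon⟩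
    have hl1 : l ≤ 1 := le_trans hlρ.le hρ1
    have hlq : (0:ℝ) < l ^ q := Real.rpow_pos_of_pos hl0 q
    have hlp : (0:ℝ) < l ^ p := Real.rpow_pos_of_pos hl0 p
    have hpt : ∀ x ∈ Ω, l ^ q * (|w x / l| ^ p + a x * |w x / l| ^ q)
        ≤ w x ^ p + a x * w x ^ q := by
      intro x hx
      obtain ⟨e1, e2⟩ := scale_pt l hl0 x
      rw [e1, e2, mul_add]
      have hlqp : l ^ q / l ^ p ≤ 1 := by
        rw [← Real.rpow_sub hl0]
        exact Real.rpow_le_one hl0.le hl1 (by linarith)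
      have t1 : l ^ q * (w x ^ p / l ^ p) ≤ w x ^ p := by
        have he : l ^ q * (w x ^ p / l ^ p) = (l ^ q / l ^ p) * w x ^ p := by ring
        rw [he]
        exact mul_le_of_le_one_left (Real.rpow_nonneg (hw0 x) p) hlqp
      have t2 : l ^ q * (a x * (w x ^ q / l ^ q)) = a x * w x ^ q := by
        field_simp
      linarith only [t1, t2]
    calc l ^ q = l ^ q * 1 := (mul_one _).symm
      _ < l ^ q * ∫ x in Ω, (|w x / l| ^ p + a x * |w x / l| ^ q) := by
          exact mul_lt_mul_of_pos_left h1 hlq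
      _ = ∫ x in Ω, l ^ q * (|w x / l| ^ p + a x * |w x / l| ^ q) :=
          (integral_const_mul _ _).symm
      _ ≤ R := setIntegral_mono_on ((int_mod l hl0).const_mul _) int_R hΩm hpt
  have hRlb : ρ ^ q ≤ R := by
    by_contra hcon
    push_neg at hcon
    set l : ℝ := max (R ^ q⁻¹) (ρ/2) with hldef
    have hl0 : 0 < l := lt_max_of_lt_right (by positivity)
    have hlρ : l < ρ := by
      apply max_lt _ (by linarith)
      calc R ^ q⁻¹ < (ρ ^ q) ^ q⁻¹ := Real.rpow_lt_rpow hR0 hcon (by positivity)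
        _ = ρ := by rw [← Real.rpow_mul hρ0.le, mul_inv_cancel₀ hq0.ne', Real.rpow_one]
    have hlq := hlow l hl0 hlρ
    have hle : R ≤ l ^ q := by
      calc R = (R ^ q⁻¹) ^ q := by
            rw [← Real.rpow_mul hR0, inv_mul_cancel₀ hq0.ne', Real.rpow_one]
        _ ≤ l ^ q := Real.rpow_le_rpow (Real.rpow_nonneg hR0 _) (le_max_left _ _) hq0.le
    linarith
  have hRub : R ≤ 1 := by
    by_contra hcon
    push_neg at hcon
    have hub : R ≤ (1 + R)/2 := by
      set c : ℝ := (1 + R)/2 with hcdef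
      have hc1 : 1 < c := by rw [hcdef]; linarith
      have hc0 : (0:ℝ) ≤ c := by linarith
      set β : ℝ := min (c ^ p⁻¹) (c ^ q⁻¹) with hβdef
      have hβ1 : 1 < β := lt_min
        ((Real.one_lt_rpow_iff_of_pos (by linarith)).2 (Or.inl ⟨hc1, by positivity⟩))
        ((Real.one_lt_rpow_iff_of_pos (by linarith)).2 (Or.inl ⟨hc1, by positivity⟩))
      obtain ⟨l, hlS, hlβ⟩ := exists_lt_of_csInf_lt hSne
        (show sInf S < β by rw [hlux']; exact lt_of_le_of_lt hρ1 hβ1)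
      obtain ⟨hl0, hl1'⟩ := hlS
      rw [hrho] at hl1'
      have hlp : (0:ℝ) < l ^ p := Real.rpow_pos_of_pos hl0 p
      have hlq : (0:ℝ) < l ^ q := Real.rpow_pos_of_pos hl0 q
      have hpt : ∀ x ∈ Ω, w x ^ p + a x * w x ^ q
          ≤ max (l ^ p) (l ^ q) * (|w x / l| ^ p + a x * |w x / l| ^ q) := by
        intro x hx
        obtain ⟨e1, e2⟩ := scale_pt l hl0 x
        rw [e1, e2]
        have hax := haΩ x hx
        have h1 : w x ^ p = l ^ p * (w x ^ p / l ^ p) := by field_simp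
        have h2 : a x * w x ^ q = l ^ q * (a x * (w x ^ q / l ^ q)) := by field_simp
        calc w x ^ p + a x * w x ^ q
            = l ^ p * (w x ^ p / l ^ p) + l ^ q * (a x * (w x ^ q / l ^ q)) := by
              rw [← h1, ← h2]
          _ ≤ max (l ^ p) (l ^ q) * (w x ^ p / l ^ p)
              + max (l ^ p) (l ^ q) * (a x * (w x ^ q / l ^ q)) := by
              apply add_le_add
              · exact mul_le_mul_of_nonneg_right (le_max_left _ _)
                  (div_nonneg (Real.rpow_nonneg (hw0 x) _) hlp.le)
              · exact mul_le_mul_of_nonneg_right (le_max_right _ _)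
                  (mul_nonneg hax (div_nonneg (Real.rpow_nonneg (hw0 x) _) hlq.le))
          _ = max (l ^ p) (l ^ q) * (w x ^ p / l ^ p + a x * (w x ^ q / l ^ q)) := by ring
      have hmax0 : (0:ℝ) ≤ max (l ^ p) (l ^ q) := le_max_of_le_left hlp.le
      have hR2 : R ≤ max (l ^ p) (l ^ q)
          * ∫ x in Ω, (|w x / l| ^ p + a x * |w x / l| ^ q) := by
        calc R ≤ ∫ x in Ω, max (l ^ p) (l ^ q) * (|w x / l| ^ p + a x * |w x / l| ^ q) :=
              setIntegral_mono_on int_R ((int_mod l hl0).const_mul _) hΩm hpt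
          _ = _ := integral_const_mul _ _
      have hmaxc : max (l ^ p) (l ^ q) ≤ c := by
        apply max_le
        · calc l ^ p ≤ (c ^ p⁻¹) ^ p :=
              Real.rpow_le_rpow hl0.le (le_trans hlβ.le (min_le_left _ _)) hp0.le
            _ = c := by rw [← Real.rpow_mul hc0, inv_mul_cancel₀ hp0.ne', Real.rpow_one]
        · calc l ^ q ≤ (c ^ q⁻¹) ^ q :=
              Real.rpow_le_rpow hl0.le (le_trans hlβ.le (min_le_right _ _)) hq0.le
            _ = c := by rw [← Real.rpow_mul hc0, inv_mul_cancel₀ hq0.ne', Real.rpow_one]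
      calc R ≤ max (l ^ p) (l ^ q) * ∫ x in Ω, (|w x / l| ^ p + a x * |w x / l| ^ q) := hR2
        _ ≤ max (l ^ p) (l ^ q) * 1 := mul_le_mul_of_nonneg_left hl1' hmax0
        _ = max (l ^ p) (l ^ q) := mul_one _
        _ ≤ c := hmaxc
    linarith only [hub, hcon]
  -- gradient Lp bound
  set Ip : ℝ := ∫ x in Ω, w x ^ p with hIpdef
  have int_wp : IntegrableOn (fun x => w x ^ p) Ω := key_int w W p hp0 hwcont hw0 hWb
  have hIp0 : 0 ≤ Ip := setIntegral_nonneg hΩm fun x _ => Real.rpow_nonneg (hw0 x) _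
  have hgrad : Ip ≤ ρ ^ p := by
    by_contra hcon
    push_neg at hcon
    have hIppos : 0 < Ip := lt_trans (by positivity) hcon
    have hρIp : ρ < Ip ^ p⁻¹ := by
      calc ρ = (ρ ^ p) ^ p⁻¹ := by
            rw [← Real.rpow_mul hρ0.le, mul_inv_cancel₀ hp0.ne', Real.rpow_one]
        _ < Ip ^ p⁻¹ := Real.rpow_lt_rpow (by positivity) hcon (by positivity)
    obtain ⟨l, hlS, hlc⟩ := exists_lt_of_csInf_lt hSne (by rw [hlux']; exact hρIp)
    obtain ⟨hl0, hl1'⟩ := hlS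
    rw [hrho] at hl1'
    have hlp : (0:ℝ) < l ^ p := Real.rpow_pos_of_pos hl0 p
    have int_dp : IntegrableOn (fun x => (w x / l) ^ p) Ω := by
      apply key_int (fun x => w x / l) (W / l) p hp0 (hwcont.div_const l)
        (fun x => div_nonneg (hw0 x) hl0.le)
      intro x
      gcongr
      exact hWb x
    have h2 : (∫ x in Ω, (w x / l) ^ p) ≤ 1 := by
      refine le_trans (setIntegral_mono_on int_dp (int_mod l hl0) hΩm ?_) hl1'
      intro x hx
      have he : (w x / l) ^ p = |w x / l| ^ p := by
        rw [abs_of_nonneg (div_nonneg (hw0 x) hl0.le)]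
      rw [he]
      have := mul_nonneg (haΩ x hx) (Real.rpow_nonneg (abs_nonneg (w x / l)) q)
      linarith
    have h3 : Ip ≤ l ^ p := by
      have he : Ip = l ^ p * ∫ x in Ω, (w x / l) ^ p := by
        rw [← integral_const_mul]
        apply setIntegral_congr_fun hΩm
        intro x _
        show w x ^ p = l ^ p * (w x / l) ^ p
        rw [Real.div_rpow (hw0 x) hl0.le]
        field_simp
      rw [he]
      calc l ^ p * ∫ x in Ω, (w x / l) ^ p ≤ l ^ p * 1 := mul_le_mul_of_nonneg_left h2 hlp.le
        _ = l ^ p := mul_one _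
    have h4 : l ^ p < Ip := by
      calc l ^ p < (Ip ^ p⁻¹) ^ p := Real.rpow_lt_rpow hl0.le hlc hp0
        _ = Ip := by rw [← Real.rpow_mul hIppos.le, inv_mul_cancel₀ hp0.ne', Real.rpow_one]
    linarith
  -- φ bounds
  set φv : ℝ := ∫ x in Ω, (w x ^ p / p + a x * w x ^ q / q) with hφdef
  have int_φ : IntegrableOn (fun x => w x ^ p / p + a x * w x ^ q / q) Ω :=
    ((key_int w W p hp0 hwcont hw0 hWb).div_const p).add
      ((key_int_a w W q hq0 hwcont hw0 hWb).div_const q)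
  have hφub : φv ≤ 1 := by
    refine le_trans (setIntegral_mono_on int_φ int_R hΩm ?_) hRub
    intro x hx
    have hwp := Real.rpow_nonneg (hw0 x) p
    have hwq := mul_nonneg (haΩ x hx) (Real.rpow_nonneg (hw0 x) q)
    have h1 : w x ^ p / p ≤ w x ^ p := by
      rw [div_le_iff₀ hp0]
      exact le_mul_of_one_le_right hwp hp.le
    have h2 : a x * w x ^ q / q ≤ a x * w x ^ q := by
      rw [div_le_iff₀ hq0]
      exact le_mul_of_one_le_right hwq (by linarith only [hp, hpq] : (1:ℝ) ≤ q)
    linarith only [h1, h2]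
  have hφlb : ρ ^ q / q ≤ φv := by
    have h1 : R / q ≤ φv := by
      rw [hRdef, ← integral_div]
      apply setIntegral_mono_on (int_R.div_const q) int_φ hΩm
      intro x hx
      have h2 : w x ^ p / q ≤ w x ^ p / p := by
        apply div_le_div_of_nonneg_left (Real.rpow_nonneg (hw0 x) p) hp0 hpq.le
      rw [add_div]
      linarith
    have h2 : ρ ^ q / q ≤ R / q := by gcongr
    linarith
  have hφ0 : 0 < φv := lt_of_lt_of_le (by positivity) hφlb
  -- Sobolev embedding
  have husuppΩ : Function.support u ⊆ Ω := fun x hx => husupp (subset_tsupport u hx)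
  have sob : ∀ s : ℝ, 1 < s → s < N * p / (N - p) →
      (∫ x in Ω, |u x| ^ s) ≤
        ((eLpNormLESNormFDerivOfLeConst ℝ (volume : Measure (EuclideanSpace ℝ (Fin N)))
          Ω p.toNNReal s.toNNReal : ℝ≥0) : ℝ) ^ s * ρ ^ s := by
    intro s hs1 hspS
    have hs0 : (0:ℝ) < s := by linarith
    have hcoep : ((p.toNNReal : ℝ≥0) : ℝ) = p := Real.coe_toNNReal p hp0.le
    have hcoes : ((s.toNNReal : ℝ≥0) : ℝ) = s := Real.coe_toNNReal s hs0.le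
    have hpn1 : (1:ℝ≥0) ≤ p.toNNReal := by
      rw [← NNReal.coe_le_coe, hcoep, NNReal.coe_one]; exact hp.le
    have hfr : (finrank ℝ (EuclideanSpace ℝ (Fin N))) = N := finrank_euclideanSpace_fin
    have hpn : p.toNNReal < (finrank ℝ (EuclideanSpace ℝ (Fin N)) : ℝ≥0) := by
      rw [hfr, ← NNReal.coe_lt_coe, hcoep]
      push_cast
      exact hpN
    have hps : ((p.toNNReal : ℝ≥0) : ℝ)⁻¹ - ((finrank ℝ (EuclideanSpace ℝ (Fin N)) : ℕ) : ℝ)⁻¹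
        ≤ ((s.toNNReal : ℝ≥0) : ℝ)⁻¹ := by
      rw [hcoep, hcoes, hfr]
      push_cast
      have key : p⁻¹ - (N:ℝ)⁻¹ = (N * p / (N - p))⁻¹ := by
        rw [inv_div]
        rw [eq_div_iff (by positivity : ((N:ℝ) * p) ≠ 0)]
        field_simp
      rw [key]
      apply inv_anti₀ hs0 hspS.le
    have SOB := eLpNorm_le_eLpNorm_fderiv_of_le (μ := (volume : Measure (EuclideanSpace ℝ (Fin N))))
      (husm.of_le (by simp)) husuppΩ hpn1 hpn hps hΩbd
    have hpnne : p.toNNReal ≠ 0 := by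
      simp only [ne_eq, Real.toNNReal_eq_zero, not_le]
      exact hp0
    have hsnne : s.toNNReal ≠ 0 := by
      simp only [ne_eq, Real.toNNReal_eq_zero, not_le]
      exact hs0
    -- gradient eLpNorm bound
    have hsupp_rp : Function.support (fun x => (‖fderiv ℝ u x‖₊ : ℝ≥0∞) ^ (p:ℝ)) ⊆ Ω := by
      intro x hx
      apply hwsupp
      simp only [Function.mem_support, ne_eq] at hx ⊢
      intro h0
      apply hx
      rw [congrFun hwdef x] at h0
      have : ‖fderiv ℝ u x‖₊ = 0 := by
        ext
        simpa using h0
      rw [this]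
      simp [ENNReal.zero_rpow_of_pos hp0]
    have hlin : (∫⁻ x, (‖fderiv ℝ u x‖₊ : ℝ≥0∞) ^ (p:ℝ)) = ENNReal.ofReal Ip := by
      rw [← setLIntegral_eq_of_support_subset hsupp_rp, hIpdef,
        ofReal_integral_eq_lintegral_ofReal int_wp
          ((ae_restrict_iff' hΩm).2 (ae_of_all _ fun x _ => Real.rpow_nonneg (hw0 x) p))]
      apply lintegral_congr
      intro x
      rw [← ENNReal.ofReal_rpow_of_nonneg (hw0 x) hp0.le]
      congr 1
      rw [congrFun hwdef x]
      exact (ofReal_norm_eq_enorm _).symm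
    have hgradeLp : eLpNorm (fderiv ℝ u) p.toNNReal volume ≤ ENNReal.ofReal ρ := by
      rw [eLpNorm_nnreal_eq_lintegral hpnne, hcoep]
      simp only [enorm_eq_nnnorm]
      rw [hlin]
      calc (ENNReal.ofReal Ip) ^ (1/p) ≤ (ENNReal.ofReal (ρ ^ p)) ^ (1/p) :=
            ENNReal.rpow_le_rpow (ENNReal.ofReal_le_ofReal hgrad) (by positivity)
        _ = ENNReal.ofReal ρ := by
            rw [← ENNReal.ofReal_rpow_of_nonneg hρ0.le hp0.le, ← ENNReal.rpow_mul,
              mul_one_div_cancel hp0.ne', ENNReal.rpow_one]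
    have hSOB2 : eLpNorm u s.toNNReal volume
        ≤ ((eLpNormLESNormFDerivOfLeConst ℝ (volume : Measure (EuclideanSpace ℝ (Fin N)))
          Ω p.toNNReal s.toNNReal : ℝ≥0) : ℝ≥0∞) * ENNReal.ofReal ρ :=
      le_trans SOB (by gcongr)
    set C : ℝ≥0 := eLpNormLESNormFDerivOfLeConst ℝ (volume : Measure (EuclideanSpace ℝ (Fin N)))
      Ω p.toNNReal s.toNNReal with hCdef
    have heq : (∫ x in Ω, |u x| ^ s) = (∫⁻ x in Ω, (‖u x‖₊ : ℝ≥0∞) ^ s).toReal := by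
      rw [integral_eq_lintegral_of_nonneg_ae
        (ae_of_all _ fun x => Real.rpow_nonneg (abs_nonneg _) s)
        ((hucont.abs.rpow_const fun x => Or.inr hs0.le).aestronglyMeasurable.restrict)]
      congr 1
      apply lintegral_congr
      intro x
      rw [← ENNReal.ofReal_rpow_of_nonneg (abs_nonneg _) hs0.le]
      congr 1
      rw [← Real.norm_eq_abs]
      exact (ofReal_norm_eq_enorm _)
    have hls : (∫⁻ x in Ω, (‖u x‖₊ : ℝ≥0∞) ^ s) ≤ ((C:ℝ≥0∞) * ENNReal.ofReal ρ) ^ s := by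
      calc (∫⁻ x in Ω, (‖u x‖₊:ℝ≥0∞) ^ s) ≤ ∫⁻ x, (‖u x‖₊:ℝ≥0∞) ^ s :=
            setLIntegral_le_lintegral _ _
        _ = (eLpNorm u s.toNNReal volume) ^ s := by
            rw [eLpNorm_nnreal_eq_lintegral hsnne]
            simp only [enorm_eq_nnnorm]
            rw [hcoes, ← ENNReal.rpow_mul, one_div,
              inv_mul_cancel₀ hs0.ne', ENNReal.rpow_one]
        _ ≤ ((C:ℝ≥0∞) * ENNReal.ofReal ρ) ^ s := ENNReal.rpow_le_rpow hSOB2 hs0.le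
    rw [heq]
    have hfin : ((C:ℝ≥0∞) * ENNReal.ofReal ρ) ^ s ≠ ⊤ := by
      apply ENNReal.rpow_ne_top_of_nonneg hs0.le
      exact ENNReal.mul_ne_top ENNReal.coe_ne_top ENNReal.ofReal_ne_top
    calc (∫⁻ x in Ω, (‖u x‖₊ : ℝ≥0∞) ^ s).toReal
        ≤ (((C:ℝ≥0∞) * ENNReal.ofReal ρ) ^ s).toReal := ENNReal.toReal_mono hfin hls
      _ = ((C:ℝ) * ρ) ^ s := by
          rw [← ENNReal.toReal_rpow, ENNReal.toReal_mul, ENNReal.coe_toReal,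
            ENNReal.toReal_ofReal hρ0.le]
      _ = (C:ℝ) ^ s * ρ ^ s := Real.mul_rpow (NNReal.coe_nonneg _) hρ0.le
  -- the f-term
  have int_u1 : IntegrableOn (fun x => |u x| ^ (q*θ)) Ω :=
    key_int (fun x => |u x|) U (q*θ) (by linarith) hucont.abs (fun x => abs_nonneg _) hUb
  have int_u2 : IntegrableOn (fun x => |u x| ^ r) Ω :=
    key_int (fun x => |u x|) U r hr0 hucont.abs (fun x => abs_nonneg _) hUb
  have hFb : (∫ x in Ω, ∫ τ in (0:ℝ)..(u x), f x τ) ≤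
      ε * (∫ x in Ω, |u x| ^ (q*θ)) + δ * (∫ x in Ω, |u x| ^ r) := by
    have hint12 : IntegrableOn (fun x => ε * |u x| ^ (q*θ) + δ * |u x| ^ r) Ω :=
      (int_u1.const_mul ε).add (int_u2.const_mul δ)
    have hae : ∀ᵐ x ∂(volume.restrict Ω),
        (∫ τ in (0:ℝ)..(u x), f x τ) ≤ ε * |u x| ^ (q*θ) + δ * |u x| ^ r := by
      filter_upwards [hfcont, hδae] with x hxc hxb
      have h := absIntLe hxc hqθ1 (by linarith : (1:ℝ) < r) hε0.le hδ0.le hxb (u x)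
      exact le_trans (le_abs_self _) h
    have h1 : 0 ≤ ∫ x in Ω, |u x| ^ (q*θ) :=
      setIntegral_nonneg hΩm fun x _ => Real.rpow_nonneg (abs_nonneg _) _
    have h2 : 0 ≤ ∫ x in Ω, |u x| ^ r :=
      setIntegral_nonneg hΩm fun x _ => Real.rpow_nonneg (abs_nonneg _) _
    by_cases hI : Integrable (fun x => ∫ τ in (0:ℝ)..(u x), f x τ) (volume.restrict Ω)
    · calc (∫ x in Ω, ∫ τ in (0:ℝ)..(u x), f x τ)
          ≤ ∫ x in Ω, (ε * |u x| ^ (q*θ) + δ * |u x| ^ r) := integral_mono_ae hI hint12 hae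
        _ = ε * (∫ x in Ω, |u x| ^ (q*θ)) + δ * (∫ x in Ω, |u x| ^ r) := by
            rw [integral_add (int_u1.const_mul ε) (int_u2.const_mul δ),
              integral_const_mul, integral_const_mul]
    · rw [integral_undef hI]
      exact add_nonneg (mul_nonneg hε0.le h1) (mul_nonneg hδ0.le h2)
  -- the M-term
  have hMφ : (m1 / q ^ θ) * ρ ^ (q*θ) ≤ ∫ τ in (0:ℝ)..φv, M τ := by
    rw [hMint φv hφ0.le]
    have h := Mlow hMcont hMc0 hθ1 hMc1 hφ0 hφub
    have h2 : (ρ ^ q / q) ^ θ ≤ φv ^ θ := Real.rpow_le_rpow (by positivity) hφlb hθ0.le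
    have h3 : (ρ ^ q / q) ^ θ = ρ ^ (q*θ) / q ^ θ := by
      rw [Real.div_rpow (Real.rpow_nonneg hρ0.le q) hq0.le, ← Real.rpow_mul hρ0.le]
    calc (m1 / q ^ θ) * ρ ^ (q*θ) = m1 * ((ρ ^ q / q) ^ θ) := by rw [h3]; ring
      _ ≤ m1 * φv ^ θ := mul_le_mul_of_nonneg_left h2 hm1pos.le
      _ ≤ _ := h
  -- put it together
  have hI1 : (∫ x in Ω, |u x| ^ (q*θ)) ≤ K1 * ρ ^ (q*θ) := by
    have h := sob (q*θ) hqθ1 hqθpS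
    rw [hK1def]
    exact h
  have hI2 : (∫ x in Ω, |u x| ^ r) ≤ K2 * ρ ^ r := by
    have h := sob r (by linarith) hr2
    rw [hK2def]
    exact h
  have hρθ : (0:ℝ) ≤ ρ ^ (q*θ) := Real.rpow_nonneg hρ0.le _
  have hε1 : ε * (∫ x in Ω, |u x| ^ (q*θ)) ≤ (m1 / (q ^ θ * 2)) * ρ ^ (q*θ) := by
    have hεK : ε * K1 ≤ m1 / (q ^ θ * 2) := by
      rw [hεdef, div_mul_eq_mul_div, div_le_div_iff₀ (by positivity) (by positivity)]
      have hh : (0:ℝ) < m1 * q ^ θ := mul_pos hm1pos hQ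
      linarith only [hh]
    calc ε * (∫ x in Ω, |u x| ^ (q*θ)) ≤ ε * (K1 * ρ ^ (q*θ)) :=
          mul_le_mul_of_nonneg_left hI1 hε0.le
      _ = (ε * K1) * ρ ^ (q*θ) := by ring
      _ ≤ (m1 / (q ^ θ * 2)) * ρ ^ (q*θ) := mul_le_mul_of_nonneg_right hεK hρθ
  have hδ2 : δ * (∫ x in Ω, |u x| ^ r) ≤ (m1 / (q ^ θ * 4)) * ρ ^ (q*θ) := by
    have hρsplit : ρ ^ r = ρ ^ (q*θ) * ρ ^ (r - q*θ) := by
      rw [← Real.rpow_add hρ0]; ring_nf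
    have hρsmall : ρ ^ (r - q*θ) ≤ base := by
      have h3 : ρ ≤ base ^ (1/(r - q*θ)) := min_le_right _ _
      calc ρ ^ (r - q*θ) ≤ (base ^ (1/(r - q*θ))) ^ (r - q*θ) :=
            Real.rpow_le_rpow hρ0.le h3 hrqθ.le
        _ = base := by
            rw [← Real.rpow_mul hbase0.le, one_div, inv_mul_cancel₀ hrqθ.ne', Real.rpow_one]
    have hρr : (0:ℝ) ≤ ρ ^ (r - q*θ) := Real.rpow_nonneg hρ0.le _
    have h4a : K2 * ρ ^ (r - q*θ) ≤ (K2+1) * base :=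
      mul_le_mul (by linarith only [hK2nn]) hρsmall hρr (by linarith only [hK2nn])
    have h5 : δ * (K2+1) * base = m1 / (q ^ θ * 4) := by
      rw [hbasedef]
      field_simp
    calc δ * (∫ x in Ω, |u x| ^ r) ≤ δ * (K2 * ρ ^ r) := mul_le_mul_of_nonneg_left hI2 hδ0.le
      _ = (δ * ρ ^ (q*θ)) * (K2 * ρ ^ (r - q*θ)) := by rw [hρsplit]; ring
      _ ≤ (δ * ρ ^ (q*θ)) * ((K2+1) * base) :=
          mul_le_mul_of_nonneg_left h4a (by positivity)
      _ = (δ * (K2+1) * base) * ρ ^ (q*θ) := by ring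
      _ = (m1 / (q ^ θ * 4)) * ρ ^ (q*θ) := by rw [h5]
  show (m1 / (q ^ θ * 4)) * ρ ^ (q*θ) ≤ (∫ τ in (0:ℝ)..φv, M τ)
      - ∫ x in Ω, ∫ τ in (0:ℝ)..(u x), f x τ
  have hsum : (m1 / (q ^ θ * 4)) * ρ ^ (q*θ)
      = (m1 / q ^ θ) * ρ ^ (q*θ) - (m1 / (q ^ θ * 2)) * ρ ^ (q*θ)
        - (m1 / (q ^ θ * 4)) * ρ ^ (q*θ) := by
    field_simp
    ring
  linarith only [hMφ, hFb, hε1, hδ2, hsum]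
end
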